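/- arXiv:1606.06071 — 2 statements merged into one kernel-verified Lean document; each statement's English description precedes it below -/
import Mathlib

section
/- Let g : Ω → ℝ on a bounded domain Ω ⊂ ℝ³ of diameter R, x₀ ∈ Ω, 0 < 3h < R, and suppose |g(x)| ≤ A h^{-2} whenever |x-x₀| ≤ 3h and |g(x)| ≤ A (|x-x₀| - h)^{-2} whenever |x-x₀| > 3h. Let σ(x) = √(|x-x₀|² + K²h²) with K ≥ 1. Then ‖σ^{1/2} g‖_{L²(Ω)} ≤ C A |ln h|^{1/2} for a constant C depending only on K and R (assuming h < 1/2). -/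
/-!
Near `x₀` the weight `√(‖x - x₀‖² + K²h²)` is at most `(3 + |K|) h`, and for `‖x - x₀‖ > 3h` it is
at most `(1 + |K|) ‖x - x₀‖` while `(‖x - x₀‖ - h)⁻⁴ ≤ (3/2)⁴ ‖x - x₀‖⁻⁴`. Hence the integrand is
dominated by `A² h⁻³` on the ball of radius `3h`, whose volume is of order `h³`, plus
`A² ‖x - x₀‖⁻³` on the annulus `3h < ‖x - x₀‖ ≤ R`, whose integral in polar coordinates is
`3 |B(0,1)| log (R / 3h) = O(|log h|)`. Since `h < 1/2`, `2 |log h| ≥ 1` absorbs the constants.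
-/

open Real MeasureTheory Metric Set Module

lemma sqrt_sq_add_sq_mul_sq_le (K : ℝ) {r h : ℝ} (hr : 0 ≤ r) (hh : 0 ≤ h) :
    √(r ^ 2 + K ^ 2 * h ^ 2) ≤ r + |K| * h := by
  rw [sqrt_le_iff]
  refine ⟨by positivity, ?_⟩
  nlinarith [sq_abs K, mul_nonneg (mul_nonneg hr (abs_nonneg K)) hh]

lemma sq_le_div_pow_four_of_abs_le_mul_rpow_neg_two {t A s : ℝ} (hs : 0 < s)
    (ht : |t| ≤ A * s ^ (-(2 : ℝ))) : t ^ 2 ≤ A ^ 2 / s ^ 4 := by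
  rw [rpow_neg hs.le, rpow_two] at ht
  calc t ^ 2 = |t| ^ 2 := (sq_abs t).symm
    _ ≤ (A * (s ^ 2)⁻¹) ^ 2 := pow_le_pow_left₀ (abs_nonneg t) ht 2
    _ = A ^ 2 / s ^ 4 := by field_simp

lemma sqrt_mul_sq_le_of_le_three_mul (K : ℝ) {r h t A : ℝ} (hr : 0 ≤ r) (h0 : 0 < h)
    (hrh : r ≤ 3 * h) (ht : |t| ≤ A * h ^ (-(2 : ℝ))) :
    √(r ^ 2 + K ^ 2 * h ^ 2) * t ^ 2 ≤ (3 + |K|) * A ^ 2 / h ^ 3 := by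
  have hσ : √(r ^ 2 + K ^ 2 * h ^ 2) ≤ (3 + |K|) * h := by
    linarith [sqrt_sq_add_sq_mul_sq_le K hr h0.le]
  calc √(r ^ 2 + K ^ 2 * h ^ 2) * t ^ 2 ≤ (3 + |K|) * h * (A ^ 2 / h ^ 4) := by
        gcongr
        exact sq_le_div_pow_four_of_abs_le_mul_rpow_neg_two h0 ht
    _ = (3 + |K|) * A ^ 2 / h ^ 3 := by field_simp

lemma sqrt_mul_sq_le_of_three_mul_lt (K : ℝ) {r h t A : ℝ} (h0 : 0 < h) (hrh : 3 * h < r)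
    (ht : |t| ≤ A * (r - h) ^ (-(2 : ℝ))) :
    √(r ^ 2 + K ^ 2 * h ^ 2) * t ^ 2 ≤ (1 + |K|) * (3 / 2) ^ 4 * A ^ 2 * (r ^ 3)⁻¹ := by
  have hr : 0 < r := by linarith
  have hσ : √(r ^ 2 + K ^ 2 * h ^ 2) ≤ (1 + |K|) * r := by
    nlinarith [sqrt_sq_add_sq_mul_sq_le K hr.le h0.le, abs_nonneg K]
  have hrh' : 2 / 3 * r ≤ r - h := by linarith
  calc √(r ^ 2 + K ^ 2 * h ^ 2) * t ^ 2 ≤ (1 + |K|) * r * (A ^ 2 / (2 / 3 * r) ^ 4) := by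
        gcongr
        exact (sq_le_div_pow_four_of_abs_le_mul_rpow_neg_two (by linarith) ht).trans
          (by gcongr)
    _ = (1 + |K|) * (3 / 2) ^ 4 * A ^ 2 * (r ^ 3)⁻¹ := by field_simp

lemma one_le_two_mul_abs_log {h : ℝ} (h0 : 0 < h) (hh : h < 1 / 2) : 1 ≤ 2 * |log h| := by
  have : log 2 < |log h| := by
    rw [abs_of_neg (log_neg h0 (by linarith)), ← log_inv]
    exact log_lt_log two_pos (by rw [lt_inv_comm₀ two_pos h0]; linarith)
  linarith [log_two_gt_d9]

lemma log_div_three_mul_le {R h : ℝ} (hR : 0 < R) (h0 : 0 < h) :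
    log (R / (3 * h)) ≤ |log R| + |log h| := by
  rw [log_div hR.ne' (mul_pos three_pos h0).ne', log_mul three_ne_zero h0.ne']
  linarith [le_abs_self (log R), neg_abs_le (log h), log_nonneg (show (1 : ℝ) ≤ 3 by norm_num)]

section Majorant

variable {E : Type*} [NormedAddCommGroup E] [NormedSpace ℝ E]

noncomputable def ballAnnulusMajorant (x₀ : E) (ρ R c₁ c₂ : ℝ) (x : E) : ℝ :=
  (closedBall x₀ ρ).indicator (fun _ ↦ c₁) x +
    c₂ * (Ioc ρ R).indicator (fun r ↦ (r ^ finrank ℝ E)⁻¹) ‖x - x₀‖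

lemma ballAnnulusMajorant_nonneg (x₀ : E) {ρ R c₁ c₂ : ℝ} (hρ : 0 ≤ ρ) (hc₁ : 0 ≤ c₁)
    (hc₂ : 0 ≤ c₂) (x : E) : 0 ≤ ballAnnulusMajorant x₀ ρ R c₁ c₂ x := by
  refine add_nonneg (indicator_nonneg (fun _ _ ↦ hc₁) _)
    (mul_nonneg hc₂ (indicator_nonneg (fun r hr ↦ ?_) _))
  have : 0 < r := hρ.trans_lt hr.1
  positivity

lemma sqrt_mul_sq_le_ballAnnulusMajorant (hE : finrank ℝ E = 3) (K : ℝ) {x₀ x : E}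
    {R h A t : ℝ} (h0 : 0 < h) (hxR : ‖x - x₀‖ ≤ R)
    (ht₁ : ‖x - x₀‖ ≤ 3 * h → |t| ≤ A * h ^ (-(2 : ℝ)))
    (ht₂ : 3 * h < ‖x - x₀‖ → |t| ≤ A * (‖x - x₀‖ - h) ^ (-(2 : ℝ))) :
    √(‖x - x₀‖ ^ 2 + K ^ 2 * h ^ 2) * t ^ 2 ≤
      ballAnnulusMajorant x₀ (3 * h) R ((3 + |K|) * A ^ 2 / h ^ 3)
        ((1 + |K|) * (3 / 2) ^ 4 * A ^ 2) x := by
  rcases le_or_gt ‖x - x₀‖ (3 * h) with hnear | hfar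
  · rw [ballAnnulusMajorant, indicator_of_mem (mem_closedBall_iff_norm.2 hnear),
      indicator_of_notMem (fun hmem ↦ hnear.not_gt hmem.1), mul_zero, add_zero]
    exact sqrt_mul_sq_le_of_le_three_mul K (norm_nonneg _) h0 hnear (ht₁ hnear)
  · rw [ballAnnulusMajorant,
      indicator_of_notMem (fun hmem ↦ (mem_closedBall_iff_norm.1 hmem).not_gt hfar),
      indicator_of_mem (show ‖x - x₀‖ ∈ Ioc (3 * h) R from ⟨hfar, hxR⟩), hE, zero_add]
    exact sqrt_mul_sq_le_of_three_mul_lt K h0 hfar (ht₂ hfar)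

variable [FiniteDimensional ℝ E] [Nontrivial E]

lemma pow_pred_finrank_smul_indicator_Ioc_inv_pow {a b : ℝ} (ha : 0 < a) (y : ℝ) :
    y ^ (finrank ℝ E - 1) • (Ioc a b).indicator (fun r ↦ (r ^ finrank ℝ E)⁻¹) y
      = (Ioc a b).indicator (fun r ↦ r⁻¹) y := by
  by_cases hy : y ∈ Ioc a b
  · have hy0 : y ≠ 0 := (ha.trans hy.1).ne'
    rw [indicator_of_mem hy, indicator_of_mem hy, smul_eq_mul,
      ← Nat.sub_add_cancel (finrank_pos (R := ℝ) (M := E)), pow_succ, Nat.add_sub_cancel]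
    field_simp
  · simp [indicator_of_notMem hy]

variable [MeasurableSpace E] [BorelSpace E] (μ : Measure E) [μ.IsAddHaarMeasure]

lemma integrable_indicator_Ioc_inv_pow_finrank_norm_sub (x₀ : E) {a b : ℝ} (ha : 0 < a) :
    Integrable (fun x ↦ (Ioc a b).indicator (fun r ↦ (r ^ finrank ℝ E)⁻¹) ‖x - x₀‖) μ := by
  refine Integrable.comp_sub_right (μ := μ)
    (f := fun x ↦ (Ioc a b).indicator (fun r ↦ (r ^ finrank ℝ E)⁻¹) ‖x‖) ?_ x₀
  rw [integrable_fun_norm_addHaar μ]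
  simp_rw [pow_pred_finrank_smul_indicator_Ioc_inv_pow ha]
  refine (integrable_indicator_iff measurableSet_Ioc |>.2 ?_).integrableOn
  refine (ContinuousOn.integrableOn_Icc ?_).mono_set Ioc_subset_Icc_self
  exact continuousOn_inv₀.mono fun y hy ↦ (ha.trans_le hy.1).ne'

lemma integral_indicator_Ioc_inv_pow_finrank_norm_sub (x₀ : E) {a b : ℝ} (ha : 0 < a)
    (hab : a ≤ b) :
    ∫ x, (Ioc a b).indicator (fun r ↦ (r ^ finrank ℝ E)⁻¹) ‖x - x₀‖ ∂μ
      = finrank ℝ E * μ.real (ball 0 1) * log (b / a) := by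
  rw [integral_sub_right_eq_self (fun x ↦ (Ioc a b).indicator (fun r ↦ (r ^ finrank ℝ E)⁻¹) ‖x‖),
    integral_fun_norm_addHaar μ]
  simp_rw [pow_pred_finrank_smul_indicator_Ioc_inv_pow ha]
  rw [integral_indicator measurableSet_Ioc, Measure.restrict_restrict measurableSet_Ioc,
    inter_eq_self_of_subset_left (Ioc_subset_Ioi_self.trans (Ioi_subset_Ioi ha.le)),
    ← intervalIntegral.integral_of_le hab, integral_inv_of_pos ha (ha.trans_le hab),
    nsmul_eq_mul, smul_eq_mul, mul_assoc]

lemma integrable_ballAnnulusMajorant (x₀ : E) {ρ : ℝ} (R c₁ c₂ : ℝ) (hρ : 0 < ρ) :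
    Integrable (ballAnnulusMajorant x₀ ρ R c₁ c₂) μ :=
  ((integrableOn_const measure_closedBall_lt_top.ne).integrable_indicator
    measurableSet_closedBall).add
    ((integrable_indicator_Ioc_inv_pow_finrank_norm_sub μ x₀ hρ).const_mul c₂)

lemma integral_ballAnnulusMajorant (x₀ : E) {ρ R : ℝ} (c₁ c₂ : ℝ) (hρ : 0 < ρ) (hρR : ρ ≤ R) :
    ∫ x, ballAnnulusMajorant x₀ ρ R c₁ c₂ x ∂μ
      = (ρ ^ finrank ℝ E * c₁ + finrank ℝ E * c₂ * log (R / ρ)) * μ.real (ball 0 1) := by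
  unfold ballAnnulusMajorant
  rw [integral_add ((integrableOn_const measure_closedBall_lt_top.ne).integrable_indicator
      measurableSet_closedBall)
      ((integrable_indicator_Ioc_inv_pow_finrank_norm_sub μ x₀ hρ).const_mul c₂),
    integral_indicator_const _ measurableSet_closedBall, integral_const_mul,
    integral_indicator_Ioc_inv_pow_finrank_norm_sub μ x₀ hρ hρR,
    Measure.addHaar_real_closedBall μ x₀ hρ.le, smul_eq_mul]
  ring

theorem setIntegral_sqrt_mul_sq_le_of_finrank_eq_three (hE : finrank ℝ E = 3) (K : ℝ)
    {R h A : ℝ} {Ω : Set E} {x₀ : E} {g : E → ℝ}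
    (hΩ : Bornology.IsBounded Ω) (hdiam : diam Ω ≤ R) (hx₀ : x₀ ∈ Ω) (h0 : 0 < h)
    (hh : h < 1 / 2) (h3R : 3 * h < R)
    (hg₁ : ∀ x ∈ Ω, ‖x - x₀‖ ≤ 3 * h → |g x| ≤ A * h ^ (-(2 : ℝ)))
    (hg₂ : ∀ x ∈ Ω, 3 * h < ‖x - x₀‖ → |g x| ≤ A * (‖x - x₀‖ - h) ^ (-(2 : ℝ))) :
    ∫ x in Ω, √(‖x - x₀‖ ^ 2 + K ^ 2 * h ^ 2) * g x ^ 2 ∂μ ≤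
      (54 * (3 + |K|) + 3 * (3 / 2) ^ 4 * (1 + |K|) * (2 * |log R| + 1)) * μ.real (ball 0 1)
        * (A ^ 2 * |log h|) := by
  set B := ballAnnulusMajorant x₀ (3 * h) R ((3 + |K|) * A ^ 2 / h ^ 3)
    ((1 + |K|) * (3 / 2) ^ 4 * A ^ 2)
  have hB : Integrable B μ := integrable_ballAnnulusMajorant μ x₀ _ _ _ (by positivity)
  have hFB (x : E) (hx : x ∈ Ω) : √(‖x - x₀‖ ^ 2 + K ^ 2 * h ^ 2) * g x ^ 2 ≤ B x :=
    sqrt_mul_sq_le_ballAnnulusMajorant hE K h0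
      (dist_eq_norm x x₀ ▸ (dist_le_diam_of_mem hΩ hx hx₀).trans hdiam) (hg₁ x hx) (hg₂ x hx)
  have hlog := log_div_three_mul_le (R := R) (by linarith) h0
  have hL := one_le_two_mul_abs_log h0 hh
  calc ∫ x in Ω, √(‖x - x₀‖ ^ 2 + K ^ 2 * h ^ 2) * g x ^ 2 ∂μ ≤ ∫ x in Ω, B x ∂μ :=
        setIntegral_mono_of_nonneg (fun x _ ↦ by positivity) hFB hB.integrableOn
    _ ≤ ∫ x, B x ∂μ := setIntegral_le_integral hB
        (.of_forall (ballAnnulusMajorant_nonneg x₀ (by positivity) (by positivity) (by positivity)))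
    _ = (27 * (3 + |K|) * A ^ 2 + 3 * (1 + |K|) * (3 / 2) ^ 4 * A ^ 2 * log (R / (3 * h)))
          * μ.real (ball 0 1) := by
        rw [integral_ballAnnulusMajorant μ x₀ _ _ (by positivity) h3R.le, hE]
        field_simp
        ring
    _ ≤ _ := by
        rw [mul_right_comm _ (μ.real _)]
        refine mul_le_mul_of_nonneg_right ?_ measureReal_nonneg
        have hc : 0 ≤ 3 * (1 + |K|) * (3 / 2) ^ 4 * A ^ 2 := by positivity
        have h2L : 0 ≤ 2 * |log h| - 1 := by linarith
        nlinarith [mul_le_mul_of_nonneg_left hlog hc,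
          mul_nonneg (mul_nonneg (by positivity : (0 : ℝ) ≤ 3 + |K|) (sq_nonneg A)) h2L,
          mul_nonneg (mul_nonneg hc (abs_nonneg (log R))) h2L]

end Majorant

theorem stmt6_general (K R : ℝ) :
    ∃ C > 0, ∀ (Ω : Set (EuclideanSpace ℝ (Fin 3))) (x₀ : EuclideanSpace ℝ (Fin 3))
      (h A : ℝ) (g : EuclideanSpace ℝ (Fin 3) → ℝ),
      Bornology.IsBounded Ω → Metric.diam Ω ≤ R → x₀ ∈ Ω →
      0 < h → h < 1 / 2 → 3 * h < R → 0 ≤ A →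
      (∀ x ∈ Ω, ‖x - x₀‖ ≤ 3 * h → |g x| ≤ A * h ^ (-(2 : ℝ))) →
      (∀ x ∈ Ω, 3 * h < ‖x - x₀‖ → |g x| ≤ A * (‖x - x₀‖ - h) ^ (-(2 : ℝ))) →
      Real.sqrt (∫ x in Ω, Real.sqrt (‖x - x₀‖ ^ 2 + K ^ 2 * h ^ 2) * (g x) ^ 2) ≤
        C * A * Real.sqrt |Real.log h| := by
  set C₀ := (54 * (3 + |K|) + 3 * (3 / 2) ^ 4 * (1 + |K|) * (2 * |log R| + 1)) *
    volume.real (ball (0 : EuclideanSpace ℝ (Fin 3)) 1)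
  have hC₀ : 0 < C₀ :=
    mul_pos (by positivity)
      (ENNReal.toReal_pos (measure_ball_pos volume 0 one_pos).ne' measure_ball_lt_top.ne)
  refine ⟨√C₀, sqrt_pos.2 hC₀, fun Ω x₀ h A g hΩ hdiam hx₀ h0 hh h3R hA hg₁ hg₂ ↦ ?_⟩
  calc √(∫ x in Ω, √(‖x - x₀‖ ^ 2 + K ^ 2 * h ^ 2) * g x ^ 2) ≤ √(C₀ * (A ^ 2 * |log h|)) :=
        sqrt_le_sqrt (setIntegral_sqrt_mul_sq_le_of_finrank_eq_three volume
          finrank_euclideanSpace_fin K hΩ hdiam hx₀ h0 hh h3R hg₁ hg₂)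
    _ = √C₀ * A * √|log h| := by
        rw [sqrt_mul hC₀.le, sqrt_mul (sq_nonneg A), sqrt_sq hA, mul_assoc]

theorem stmt6 (K R : ℝ) (hK : 1 ≤ K) (hR : 0 < R) :
    ∃ C > 0, ∀ (Ω : Set (EuclideanSpace ℝ (Fin 3))) (x₀ : EuclideanSpace ℝ (Fin 3))
      (h A : ℝ) (g : EuclideanSpace ℝ (Fin 3) → ℝ),
      Bornology.IsBounded Ω → Metric.diam Ω ≤ R → x₀ ∈ Ω →
      0 < h → h < 1 / 2 → 3 * h < R → 0 ≤ A →
      (∀ x ∈ Ω, ‖x - x₀‖ ≤ 3 * h → |g x| ≤ A * h ^ (-(2 : ℝ))) →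
      (∀ x ∈ Ω, 3 * h < ‖x - x₀‖ → |g x| ≤ A * (‖x - x₀‖ - h) ^ (-(2 : ℝ))) →
      Real.sqrt (∫ x in Ω, Real.sqrt (‖x - x₀‖ ^ 2 + K ^ 2 * h ^ 2) * (g x) ^ 2) ≤
        C * A * Real.sqrt |Real.log h| :=
  stmt6_general K R
end

section
/- Let Ω ⊂ ℝ³ of diameter R ≤ 1, x₀ ∈ Ω, 0 < 3h < R, σ(x) = √(|x-x₀|² + K²h²) with K ≥ 1. Suppose |g(x)| ≤ A h^{-2} on B_{3h}(x₀) ∩ Ω and |g(x)| ≤ A(|x-x₀|-h)^{-2} on Ω \ B_{3h}(x₀). Then ‖σ^{3/2} g‖_{L²(Ω)} ≤ C A |ln h|^{1/2}, with C depending only on K, R. -/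
open Real MeasureTheory Metric Set

local notation "E3" => EuclideanSpace ℝ (Fin 3)

lemma stmt18_aux_int : IntegrableOn (fun x : E3 => ‖x‖⁻¹) (closedBall 0 1) := by
  constructor
  · exact (measurable_norm.inv).aestronglyMeasurable
  · rw [hasFiniteIntegral_iff_ofReal]
    · set μ := (volume : Measure E3).restrict (closedBall 0 1) with hμ
      have h1 : ∫⁻ x, ENNReal.ofReal ‖x‖⁻¹ ∂μ = ∫⁻ t in Ioi (0:ℝ), μ {a | t < ‖a‖⁻¹} :=
        lintegral_eq_lintegral_meas_lt μ (Filter.Eventually.of_forall fun x => by positivity)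
          measurable_norm.inv.aemeasurable
      rw [h1, ← Set.Ioc_union_Ioi_eq_Ioi (zero_le_one (α := ℝ)),
        lintegral_union measurableSet_Ioi (Set.Ioc_disjoint_Ioi le_rfl)]
      have hA : ∫⁻ t in Ioc (0:ℝ) 1, μ {a | t < ‖a‖⁻¹} ≤ volume (closedBall (0:E3) 1) * 1 := by
        calc ∫⁻ t in Ioc (0:ℝ) 1, μ {a | t < ‖a‖⁻¹}
            ≤ ∫⁻ _ in Ioc (0:ℝ) 1, volume (closedBall (0:E3) 1) := by
              refine lintegral_mono fun t => ?_
              calc μ {a | t < ‖a‖⁻¹} ≤ μ univ := measure_mono (subset_univ _)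
                _ = volume (closedBall (0:E3) 1) := by rw [hμ, Measure.restrict_apply_univ]
          _ = volume (closedBall (0:E3) 1) * 1 := by
              rw [setLIntegral_const]; congr 1
              simp [Real.volume_Ioc]
      have hB : ∫⁻ t in Ioi (1:ℝ), μ {a | t < ‖a‖⁻¹}
          ≤ (∫⁻ t in Ioi (1:ℝ), ENNReal.ofReal (t ^ (-3:ℝ))) * volume (ball (0:E3) 1) := by
        rw [← lintegral_mul_const _ (by fun_prop)]
        refine lintegral_mono_ae ?_
        filter_upwards [ae_restrict_mem measurableSet_Ioi] with t ht
        have ht1 : (1:ℝ) < t := ht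
        have ht0 : (0:ℝ) < t := by linarith
        have hsub : {a : E3 | t < ‖a‖⁻¹} ⊆ ball 0 t⁻¹ := by
          intro a ha
          simp only [mem_setOf_eq] at ha
          have hna : ‖a‖ < t⁻¹ := by
            rcases eq_or_lt_of_le (norm_nonneg a) with h0 | h0
            · rw [← h0]; positivity
            · have := inv_strictAnti₀ ht0 ha
              rwa [inv_inv] at this
          simpa [mem_ball, dist_zero_right] using hna
        calc μ {a : E3 | t < ‖a‖⁻¹} ≤ volume (ball (0:E3) t⁻¹) :=
              le_trans (Measure.restrict_le_self _) (measure_mono hsub)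
          _ = ENNReal.ofReal (t ^ (-3:ℝ)) * volume (ball (0:E3) 1) := by
              rw [Measure.addHaar_ball _ _ (by positivity : (0:ℝ) ≤ t⁻¹)]
              congr 2
              · rw [show (Module.finrank ℝ E3) = 3 from finrank_euclideanSpace_fin]
                rw [Real.rpow_neg ht0.le, show ((3:ℝ)) = ((3:ℕ):ℝ) by norm_num,
                  Real.rpow_natCast, ← inv_pow]
      have hfin1 : volume (closedBall (0:E3) 1) < ⊤ := measure_closedBall_lt_top
      have hfin2 : (∫⁻ t in Ioi (1:ℝ), ENNReal.ofReal (t ^ (-3:ℝ))) < ⊤ :=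
        (integrableOn_Ioi_rpow_of_lt (by norm_num) zero_lt_one).lintegral_lt_top
      have hfin3 : volume (ball (0:E3) 1) < ⊤ := measure_ball_lt_top
      exact lt_of_le_of_lt (add_le_add hA hB)
        (ENNReal.add_lt_top.mpr ⟨by finiteness, by finiteness⟩)
    · exact Filter.Eventually.of_forall fun x => by positivity

lemma stmt18_aux_trans (x₀ : E3) :
    IntegrableOn (fun x : E3 => ‖x - x₀‖⁻¹) (closedBall x₀ 1) ∧
    ∫ x in closedBall x₀ 1, ‖x - x₀‖⁻¹ = ∫ x in closedBall (0:E3) 1, ‖x‖⁻¹ := by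
  have hmp : MeasurePreserving (fun x : E3 => x - x₀) volume volume :=
    measurePreserving_sub_right volume x₀
  have hemb : MeasurableEmbedding (fun x : E3 => x - x₀) :=
    (Homeomorph.subRight x₀).measurableEmbedding
  have hpre : (fun x : E3 => x - x₀) ⁻¹' (closedBall 0 1) = closedBall x₀ 1 := by
    ext x
    simp [mem_closedBall, dist_eq_norm]
  constructor
  · have := (hmp.integrableOn_comp_preimage hemb (f := fun x : E3 => ‖x‖⁻¹)
      (s := closedBall 0 1)).mpr stmt18_aux_int
    rwa [hpre] at this
  · have := hmp.setIntegral_preimage_emb hemb (fun x : E3 => ‖x‖⁻¹) (closedBall 0 1)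
    rwa [hpre] at this

theorem stmt18 (K R : ℝ) (hK : 1 ≤ K) (hR₀ : 0 < R) (hR₁ : R ≤ 1) :
    ∃ C > 0, ∀ (Ω : Set (EuclideanSpace ℝ (Fin 3))) (x₀ : EuclideanSpace ℝ (Fin 3))
      (h A : ℝ) (g : EuclideanSpace ℝ (Fin 3) → ℝ),
      Bornology.IsBounded Ω → Metric.diam Ω ≤ R → x₀ ∈ Ω →
      0 < h → 3 * h < R → 0 ≤ A →
      (∀ x ∈ Ω, ‖x - x₀‖ ≤ 3 * h → |g x| ≤ A * h ^ (-(2 : ℝ))) →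
      (∀ x ∈ Ω, 3 * h < ‖x - x₀‖ → |g x| ≤ A * (‖x - x₀‖ - h) ^ (-(2 : ℝ))) →
      Real.sqrt (∫ x in Ω, (Real.sqrt (‖x - x₀‖ ^ 2 + K ^ 2 * h ^ 2)) ^ (3 : ℝ) * (g x) ^ 2) ≤
        C * A * Real.sqrt |Real.log h| := by
  set s : ℝ := Real.sqrt (9 + K ^ 2) with hs_def
  have hs0 : 0 < s := Real.sqrt_pos.mpr (by positivity)
  set I : ℝ := ∫ x in closedBall (0:E3) 1, ‖x‖⁻¹ with hI_def
  have hI0 : 0 ≤ I :=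
    setIntegral_nonneg measurableSet_closedBall (fun x _ => by positivity)
  refine ⟨Real.sqrt (6 * s ^ 3 * (I + 1)), Real.sqrt_pos.mpr (by positivity), ?_⟩
  set C : ℝ := Real.sqrt (6 * s ^ 3 * (I + 1)) with hC_def
  have hC0 : 0 < C := Real.sqrt_pos.mpr (by positivity)
  intro Ω x₀ h A g hbdd hdiam hx₀ hh h3hR hA hg1 hg2
  set f : E3 → ℝ := fun x => (Real.sqrt (‖x - x₀‖ ^ 2 + K ^ 2 * h ^ 2)) ^ (3:ℝ) * (g x) ^ 2
    with hf_def
  set F : E3 → ℝ := fun x => 6 * s ^ 3 * A ^ 2 * ‖x - x₀‖⁻¹ with hF_def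
  have hΩsub : Ω ⊆ closedBall x₀ 1 := fun x hx => by
    rw [mem_closedBall]
    exact (dist_le_diam_of_mem hbdd hx hx₀).trans (hdiam.trans hR₁)
  have hf0 : ∀ x, 0 ≤ f x := fun x =>
    mul_nonneg (Real.rpow_nonneg (Real.sqrt_nonneg _) _) (sq_nonneg _)
  have hF0 : ∀ x, 0 ≤ F x := fun x => by
    simp only [hF_def]; positivity
  have hFmeas : Measurable F := by fun_prop
  have hFint_big : IntegrableOn F (closedBall x₀ 1) :=
    (stmt18_aux_trans x₀).1.const_mul (6 * s ^ 3 * A ^ 2)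
  have hFint : IntegrableOn F Ω := hFint_big.mono_set hΩsub
  -- pointwise bound
  have hpt : ∀ x ∈ Ω, x ≠ x₀ → f x ≤ F x := by
    intro x hx hxne
    set r : ℝ := ‖x - x₀‖ with hr_def
    have hr0 : 0 < r := norm_pos_iff.mpr (sub_ne_zero.mpr hxne)
    set σ : ℝ := Real.sqrt (r ^ 2 + K ^ 2 * h ^ 2) with hσ_def
    have hσ0 : 0 ≤ σ := Real.sqrt_nonneg _
    have hrpow : σ ^ (3:ℝ) = σ ^ 3 := by
      rw [show (3:ℝ) = ((3:ℕ):ℝ) by norm_num, Real.rpow_natCast]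
    show σ ^ (3:ℝ) * (g x) ^ 2 ≤ 6 * s ^ 3 * A ^ 2 * r⁻¹
    rw [hrpow]
    by_cases hcase : r ≤ 3 * h
    · have hσb : σ ≤ s * h := by
        rw [show s * h = Real.sqrt ((9 + K ^ 2) * h ^ 2) by
          rw [Real.sqrt_mul (by positivity), Real.sqrt_sq hh.le]]
        exact Real.sqrt_le_sqrt (by nlinarith)
      have hgb : |g x| ≤ A * (h ^ 2)⁻¹ := by
        have := hg1 x hx hcase
        rwa [Real.rpow_neg hh.le, Real.rpow_two] at this
      have hg2b : (g x) ^ 2 ≤ (A * (h ^ 2)⁻¹) ^ 2 := by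
        rw [← sq_abs]; exact pow_le_pow_left₀ (abs_nonneg _) hgb 2
      have hσ3 : σ ^ 3 ≤ (s * h) ^ 3 := pow_le_pow_left₀ hσ0 hσb 3
      have hstep : σ ^ 3 * (g x) ^ 2 ≤ (s * h) ^ 3 * (A * (h ^ 2)⁻¹) ^ 2 :=
        mul_le_mul hσ3 hg2b (sq_nonneg _) (by positivity)
      refine hstep.trans ?_
      have hinv : h⁻¹ ≤ 3 * r⁻¹ := by
        have h1 : (3 * h)⁻¹ ≤ r⁻¹ := inv_anti₀ hr0 hcase
        have h2 : h⁻¹ = 3 * (3 * h)⁻¹ := by field_simp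
        linarith
      have hid : (s * h) ^ 3 * (A * (h ^ 2)⁻¹) ^ 2 = s ^ 3 * A ^ 2 * h⁻¹ := by
        field_simp
      rw [hid]
      have h3 : s ^ 3 * A ^ 2 * h⁻¹ ≤ s ^ 3 * A ^ 2 * (3 * r⁻¹) :=
        mul_le_mul_of_nonneg_left hinv (by positivity)
      have h4 : 0 ≤ s ^ 3 * A ^ 2 * r⁻¹ := by positivity
      calc s ^ 3 * A ^ 2 * h⁻¹ ≤ s ^ 3 * A ^ 2 * (3 * r⁻¹) := h3
        _ = 3 * (s ^ 3 * A ^ 2 * r⁻¹) := by ring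
        _ ≤ 6 * (s ^ 3 * A ^ 2 * r⁻¹) := by linarith
        _ = 6 * s ^ 3 * A ^ 2 * r⁻¹ := by ring
    · push_neg at hcase
      have hhr : h < r := by linarith
      have hσb : σ ≤ s * r := by
        rw [show s * r = Real.sqrt ((9 + K ^ 2) * r ^ 2) by
          rw [Real.sqrt_mul (by positivity), Real.sqrt_sq hr0.le]]
        refine Real.sqrt_le_sqrt ?_
        nlinarith [mul_nonneg (mul_nonneg (sq_nonneg K) (sub_pos.mpr hhr).le)
          (by positivity : (0:ℝ) ≤ r + h)]
      have hrh0 : 0 < r - h := by linarith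
      have hgb : |g x| ≤ A * ((r - h) ^ 2)⁻¹ := by
        have := hg2 x hx hcase
        rwa [Real.rpow_neg hrh0.le, Real.rpow_two] at this
      have hg2b : (g x) ^ 2 ≤ (A * ((r - h) ^ 2)⁻¹) ^ 2 := by
        rw [← sq_abs]; exact pow_le_pow_left₀ (abs_nonneg _) hgb 2
      have h4 : (2 / 3 * r) ^ 2 ≤ (r - h) ^ 2 := pow_le_pow_left₀ (by positivity) (by linarith) 2
      have h5 : ((r - h) ^ 2)⁻¹ ≤ ((2 / 3 * r) ^ 2)⁻¹ := inv_anti₀ (by positivity) h4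
      have hg2c : (g x) ^ 2 ≤ (A * ((2 / 3 * r) ^ 2)⁻¹) ^ 2 := by
        refine hg2b.trans ?_
        exact pow_le_pow_left₀ (by positivity) (mul_le_mul_of_nonneg_left h5 hA) 2
      have hσ3 : σ ^ 3 ≤ (s * r) ^ 3 := pow_le_pow_left₀ hσ0 hσb 3
      have hstep : σ ^ 3 * (g x) ^ 2 ≤ (s * r) ^ 3 * (A * ((2 / 3 * r) ^ 2)⁻¹) ^ 2 :=
        mul_le_mul hσ3 hg2c (sq_nonneg _) (by positivity)
      refine hstep.trans ?_
      have hid : (s * r) ^ 3 * (A * ((2 / 3 * r) ^ 2)⁻¹) ^ 2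
          = (81 / 16) * (s ^ 3 * A ^ 2 * r⁻¹) := by
        field_simp
        ring
      rw [hid]
      have h4' : 0 ≤ s ^ 3 * A ^ 2 * r⁻¹ := by positivity
      calc (81 / 16) * (s ^ 3 * A ^ 2 * r⁻¹) ≤ 6 * (s ^ 3 * A ^ 2 * r⁻¹) := by linarith
        _ = 6 * s ^ 3 * A ^ 2 * r⁻¹ := by ring
  -- integral comparison
  have key1 : (∫ x in Ω, f x) ≤ ∫ x in Ω, F x := by
    by_cases hint : IntegrableOn f Ω
    · have hsm := hint.1
      set f' : E3 → ℝ := hsm.mk f with hf'_def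
      have hff' : f =ᵐ[volume.restrict Ω] f' := hsm.ae_eq_mk
      obtain ⟨N, hNsub, hNmeas, hN0⟩ :=
        exists_measurable_superset_of_null (ae_iff.mp hff')
      have hN'meas : MeasurableSet (N ∪ {x₀}) := hNmeas.union (measurableSet_singleton x₀)
      have hN'0 : volume.restrict Ω (N ∪ {x₀}) = 0 := by
        refine measure_union_null hN0 ?_
        refine le_antisymm (le_trans (Measure.restrict_le_self _) ?_) zero_le
        simp
      set bad : Set E3 := {x | F x < f' x} with hbad_def
      have hbadmeas : MeasurableSet bad :=
        measurableSet_lt hFmeas hsm.stronglyMeasurable_mk.measurable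
      have hbad'0 : volume.restrict Ω (bad \ (N ∪ {x₀})) = 0 := by
        rw [Measure.restrict_apply (hbadmeas.diff hN'meas)]
        convert measure_empty (μ := (volume : Measure E3))
        rw [eq_empty_iff_forall_notMem]
        rintro x ⟨⟨hxbad, hxN'⟩, hxΩ⟩
        have hxN : x ∉ N := fun hc => hxN' (Or.inl hc)
        have hxne : x ≠ x₀ := fun hc => hxN' (Or.inr hc)
        have hfeq : f x = f' x := by
          by_contra hne
          exact hxN (hNsub hne)
        have := hpt x hxΩ hxne
        rw [hfeq] at this
        exact absurd hxbad (not_lt.mpr this)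
      have h_ae : f ≤ᵐ[volume.restrict Ω] F := by
        rw [Filter.EventuallyLE, ae_iff]
        refine measure_mono_null (fun x hx => ?_) (measure_union_null hN'0 hbad'0)
        simp only [mem_setOf_eq, not_le] at hx
        by_cases hxN' : x ∈ N ∪ {x₀}
        · exact Or.inl hxN'
        · have hxN : x ∉ N := fun hc => hxN' (Or.inl hc)
          have hfeq : f x = f' x := by
            by_contra hne
            exact hxN (hNsub hne)
          exact Or.inr ⟨by rw [hbad_def, mem_setOf_eq, ← hfeq]; exact hx, hxN'⟩
      exact integral_mono_ae hint hFint h_ae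
    · rw [integral_undef hint]
      exact integral_nonneg hF0
  have key2 : (∫ x in Ω, F x) ≤ ∫ x in closedBall x₀ 1, F x :=
    setIntegral_mono_set hFint_big (Filter.Eventually.of_forall hF0)
      (HasSubset.Subset.eventuallyLE hΩsub)
  have key3 : (∫ x in closedBall x₀ 1, F x) = 6 * s ^ 3 * A ^ 2 * I := by
    rw [hF_def]
    simp only []
    rw [integral_const_mul, (stmt18_aux_trans x₀).2]
  have hCsq : C ^ 2 = 6 * s ^ 3 * (I + 1) := Real.sq_sqrt (by positivity)
  have hchain : (∫ x in Ω, f x) ≤ C ^ 2 * A ^ 2 := by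
    rw [hCsq]
    have := key1.trans (key2.trans_eq key3)
    nlinarith [sq_nonneg A]
  have hsqrt : Real.sqrt (∫ x in Ω, f x) ≤ C * A := by
    have h1 : C ^ 2 * A ^ 2 = (C * A) ^ 2 := by ring
    calc Real.sqrt (∫ x in Ω, f x) ≤ Real.sqrt (C ^ 2 * A ^ 2) := Real.sqrt_le_sqrt hchain
      _ = C * A := by rw [h1, Real.sqrt_sq (by positivity)]
  have hlog : 1 ≤ Real.sqrt |Real.log h| := by
    have hh3 : h ≤ 1 / 3 := by linarith
    have hlneg : Real.log h < 0 := Real.log_neg hh (by linarith)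
    have h13 : Real.log h ≤ Real.log (1 / 3) := Real.log_le_log hh hh3
    have h3e : (1:ℝ) ≤ Real.log 3 :=
      (Real.le_log_iff_exp_le (by norm_num)).mpr
        (Real.exp_one_lt_d9.le.trans (by norm_num))
    have habs : 1 ≤ |Real.log h| := by
      rw [abs_of_neg hlneg]
      rw [one_div, Real.log_inv] at h13
      linarith
    calc (1:ℝ) = Real.sqrt 1 := Real.sqrt_one.symm
      _ ≤ Real.sqrt |Real.log h| := Real.sqrt_le_sqrt habs
  calc Real.sqrt (∫ x in Ω, f x) ≤ C * A := hsqrt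
    _ = C * A * 1 := (mul_one _).symm
    _ ≤ C * A * Real.sqrt |Real.log h| :=
      mul_le_mul_of_nonneg_left hlog (by positivity)
end
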